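/- arXiv:math/0101227 — 2 statements merged into one kernel-verified Lean document; each statement's English description precedes it below -/
import Mathlib

section
/- (Landau: optimality of the Hardy constant) Let p > 1. For every constant A < (p/(p−1))^p there exists an absolutely continuous f : [0,∞) → ℝ with f(0) = 0, f' ≥ 0 almost everywhere and 0 < ∫_0^∞ f'(x)^p dx < ∞, such that ∫_0^∞ (f(x)/x)^p dx > A ∫_0^∞ f'(x)^p dx. -/
open MeasureTheory Set Real Filter Topology

/-!
Landau's extremals: for `1/p < a < 1` let `g t = t^(-a)` on `[1, ∞)` and `g = 0` on `[0, 1)`,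
with primitive `f`. Then `∫ g^p = 1/(ap - 1)`, while for `x ≥ 1`
`(f x / x)^p = (1-a)^(-p) x^(-ap) (1 - x^(-(1-a)))^p ≥ (1-a)^(-p) (x^(-ap) - p x^(-ap-(1-a)))`
by Bernoulli's inequality. Integrating gives `∫ (f/x)^p ≥ landauRatio p a * ∫ g^p`, and
`landauRatio p a → (p/(p-1))^p` as `a → 1/p`, so every `A < (p/(p-1))^p` is beaten by some `a`.
-/

noncomputable def landauDeriv (a : ℝ) : ℝ → ℝ := (Ici 1).indicator fun t => t ^ (-a)

lemma landauDeriv_nonneg (a t : ℝ) : 0 ≤ landauDeriv a t :=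
  indicator_nonneg (fun _ ht => rpow_nonneg (zero_le_one.trans ht) _) t

lemma landauDeriv_rpow {p : ℝ} (hp : p ≠ 0) (a : ℝ) :
    (fun t => landauDeriv a t ^ p) = (Ici 1).indicator fun t => t ^ (-(a * p)) := by
  ext t
  by_cases ht : t ∈ Ici 1
  · simp [landauDeriv, indicator_of_mem ht, ← rpow_mul (zero_le_one.trans ht)]
  · simp [landauDeriv, indicator_of_notMem ht, zero_rpow hp]

lemma intervalIntegrable_landauDeriv (a x y : ℝ) :
    IntervalIntegrable (landauDeriv a) volume x y := by
  rw [intervalIntegrable_iff, landauDeriv, integrableOn_indicator_iff measurableSet_Ici]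
  have hcont : ContinuousOn (fun t : ℝ => t ^ (-a)) (Icc 1 (max x y)) :=
    continuousOn_id.rpow_const fun t ht => Or.inl (zero_lt_one.trans_le ht.1).ne'
  refine hcont.integrableOn_Icc.mono_set fun t ⟨ht1, htxy⟩ => ⟨ht1, ?_⟩
  rcases le_total x y with h | h
  · rw [uIoc_of_le h] at htxy; exact htxy.2.trans (le_max_right _ _)
  · rw [uIoc_of_ge h] at htxy; exact htxy.2.trans (le_max_left _ _)

noncomputable def landauPrimitive (a x : ℝ) : ℝ := ∫ t in 0..x, landauDeriv a t

lemma continuous_landauPrimitive (a : ℝ) : Continuous (landauPrimitive a) :=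
  intervalIntegral.continuous_primitive (intervalIntegrable_landauDeriv a) 0

lemma landauPrimitive_nonneg (a : ℝ) {x : ℝ} (hx : 0 ≤ x) : 0 ≤ landauPrimitive a x :=
  intervalIntegral.integral_nonneg hx fun t _ => landauDeriv_nonneg a t

lemma landauPrimitive_of_le_one {a x : ℝ} (hx0 : 0 ≤ x) (hx1 : x ≤ 1) :
    landauPrimitive a x = 0 := by
  have hsub : Ioc 0 x ∩ Ici 1 ⊆ {1} := fun t ⟨ht, ht1⟩ => le_antisymm (ht.2.trans hx1) ht1
  rw [landauPrimitive, intervalIntegral.integral_of_le hx0, landauDeriv,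
    setIntegral_indicator measurableSet_Ici,
    Measure.restrict_eq_zero.mpr (measure_mono_null hsub (measure_singleton 1)),
    integral_zero_measure]

lemma landauPrimitive_of_one_le {a x : ℝ} (ha : a ≠ 1) (hx : 1 ≤ x) :
    landauPrimitive a x = (x ^ (1 - a) - 1) / (1 - a) := by
  have hzero : (0 : ℝ) ∉ uIcc 1 x := by simp [uIcc_of_le hx]
  have hinter : Ioc 0 x ∩ Ici 1 = Icc 1 x := by
    ext t; simp only [mem_inter_iff, mem_Ioc, mem_Ici, mem_Icc]
    constructor
    · rintro ⟨⟨_, htx⟩, ht1⟩; exact ⟨ht1, htx⟩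
    · rintro ⟨ht1, htx⟩; exact ⟨⟨zero_lt_one.trans_le ht1, htx⟩, ht1⟩
  rw [landauPrimitive, intervalIntegral.integral_of_le (zero_le_one.trans hx), landauDeriv,
    setIntegral_indicator measurableSet_Ici, hinter, integral_Icc_eq_integral_Ioc,
    ← intervalIntegral.integral_of_le hx,
    integral_rpow (Or.inr ⟨by contrapose! ha; linarith, hzero⟩)]
  simp [one_rpow, show -a + 1 = 1 - a by ring]

lemma integrableOn_landauDeriv_rpow {a p : ℝ} (hp : p ≠ 0) (hap : 1 < a * p) :
    IntegrableOn (fun t => landauDeriv a t ^ p) (Ioi 0) := by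
  rw [landauDeriv_rpow hp, integrableOn_indicator_iff measurableSet_Ici,
    inter_eq_left.mpr (Ici_subset_Ioi.mpr one_pos), integrableOn_Ici_iff_integrableOn_Ioi]
  exact integrableOn_Ioi_rpow_of_lt (by linarith) one_pos

lemma integral_landauDeriv_rpow {a p : ℝ} (hp : p ≠ 0) (hap : 1 < a * p) :
    ∫ t in Ioi 0, landauDeriv a t ^ p = 1 / (a * p - 1) := by
  rw [landauDeriv_rpow hp, setIntegral_indicator measurableSet_Ici,
    inter_eq_right.mpr (Ici_subset_Ioi.mpr one_pos), integral_Ici_eq_integral_Ioi,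
    integral_Ioi_rpow_of_lt (by linarith) one_pos, one_rpow, neg_add_eq_sub, ← neg_sub, div_neg,
    neg_div, neg_neg]

lemma landauPrimitive_div_rpow_eq {a x : ℝ} (p : ℝ) (ha : a < 1) (hx : 1 ≤ x) :
    (landauPrimitive a x / x) ^ p =
      (1 - a) ^ (-p) * x ^ (-(a * p)) * (1 - x ^ (-(1 - a))) ^ p := by
  have hx0 : 0 < x := zero_lt_one.trans_le hx
  have hb : 0 < 1 - a := by linarith
  have hsplit : x ^ (1 - a) = x * x ^ (-a) := by rw [sub_eq_add_neg, rpow_add hx0, rpow_one]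
  have hfactor :
      (x ^ (1 - a) - 1) / (1 - a) / x = (1 - a)⁻¹ * x ^ (-a) * (1 - x ^ (-(1 - a))) := by
    rw [rpow_neg hx0.le (1 - a), hsplit]
    field_simp
  have hle : x ^ (-(1 - a)) ≤ 1 := rpow_le_one_of_one_le_of_nonpos hx (by linarith)
  rw [landauPrimitive_of_one_le ha.ne hx, hfactor, mul_rpow (by positivity) (by linarith),
    mul_rpow (by positivity) (by positivity), inv_rpow hb.le, ← rpow_neg hb.le,
    ← rpow_mul hx0.le, neg_mul]

lemma landauPrimitive_div_rpow_le {a p x : ℝ} (hp : 0 ≤ p) (ha : a < 1) (hx : 1 ≤ x) :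
    (landauPrimitive a x / x) ^ p ≤ (1 - a) ^ (-p) * x ^ (-(a * p)) := by
  have hle : x ^ (-(1 - a)) ≤ 1 := rpow_le_one_of_one_le_of_nonpos hx (by linarith)
  have hpos : 0 ≤ x ^ (-(1 - a)) := rpow_nonneg (zero_le_one.trans hx) _
  rw [landauPrimitive_div_rpow_eq p ha hx]
  exact mul_le_of_le_one_right (by positivity) (rpow_le_one (by linarith) (by linarith) hp)

lemma le_landauPrimitive_div_rpow {a p x : ℝ} (hp : 1 ≤ p) (ha : a < 1) (hx : 1 ≤ x) :
    (1 - a) ^ (-p) * (x ^ (-(a * p)) - p * x ^ (-(a * p) - (1 - a))) ≤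
      (landauPrimitive a x / x) ^ p := by
  have hx0 : 0 < x := zero_lt_one.trans_le hx
  have hle : x ^ (-(1 - a)) ≤ 1 := rpow_le_one_of_one_le_of_nonpos hx (by linarith)
  have hbernoulli : 1 + p * -x ^ (-(1 - a)) ≤ (1 + -x ^ (-(1 - a))) ^ p :=
    one_add_mul_self_le_rpow_one_add (by linarith) hp
  rw [landauPrimitive_div_rpow_eq p ha hx, sub_eq_add_neg (-(a * p)), rpow_add hx0]
  calc (1 - a) ^ (-p) * (x ^ (-(a * p)) - p * (x ^ (-(a * p)) * x ^ (-(1 - a))))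
      = (1 - a) ^ (-p) * x ^ (-(a * p)) * (1 + p * -x ^ (-(1 - a))) := by ring
    _ ≤ (1 - a) ^ (-p) * x ^ (-(a * p)) * (1 - x ^ (-(1 - a))) ^ p := by
      rw [← sub_eq_add_neg] at hbernoulli
      gcongr

lemma integrableOn_landauPrimitive_div_rpow {a p : ℝ} (hp : 0 ≤ p) (ha : a < 1)
    (hap : 1 < a * p) :
    IntegrableOn (fun x => (landauPrimitive a x / x) ^ p) (Ioi 1) := by
  have hmeas : Measurable fun x => (landauPrimitive a x / x) ^ p :=
    ((continuous_landauPrimitive a).measurable.div measurable_id).pow_const p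
  have hbound := (integrableOn_Ioi_rpow_of_lt (a := -(a * p)) (by linarith) one_pos).const_mul
    ((1 - a) ^ (-p))
  refine hbound.mono' hmeas.aestronglyMeasurable
    ((ae_restrict_iff' measurableSet_Ioi).mpr (.of_forall fun x hx => ?_))
  have hx : 1 ≤ x := le_of_lt hx
  have hx0 : 0 ≤ x := zero_le_one.trans hx
  rw [Real.norm_of_nonneg (rpow_nonneg (div_nonneg (landauPrimitive_nonneg a hx0) hx0) p)]
  exact landauPrimitive_div_rpow_le hp ha hx

noncomputable def landauRatio (p a : ℝ) : ℝ :=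
  (1 - a) ^ (-p) * (1 - p * (a * p - 1) / (a * p - a))

lemma landauRatio_mul_le_integral {a p : ℝ} (hp : 1 ≤ p) (ha : a < 1) (hap : 1 < a * p) :
    landauRatio p a * ∫ t in Ioi 0, landauDeriv a t ^ p ≤
      ∫ x in Ioi 0, (landauPrimitive a x / x) ^ p := by
  have hvanish : ∀ x ∈ Ioi (0 : ℝ) \ Ioi 1, (landauPrimitive a x / x) ^ p = 0 :=
    fun x ⟨hx0, hx1⟩ => by
      rw [landauPrimitive_of_le_one (le_of_lt hx0) (not_lt.mp hx1), zero_div,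
        zero_rpow (by linarith)]
  have hint₁ := integrableOn_Ioi_rpow_of_lt (a := -(a * p)) (by linarith) one_pos
  have hint₂ := integrableOn_Ioi_rpow_of_lt (a := -(a * p) - (1 - a)) (by linarith) one_pos
  have hlower :
      ∫ x in Ioi (1 : ℝ), (1 - a) ^ (-p) * (x ^ (-(a * p)) - p * x ^ (-(a * p) - (1 - a))) =
        landauRatio p a * (1 / (a * p - 1)) := by
    rw [integral_const_mul, integral_sub hint₁ (hint₂.const_mul p), integral_const_mul,
      integral_Ioi_rpow_of_lt (by linarith) one_pos, integral_Ioi_rpow_of_lt (by linarith) one_pos,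
      one_rpow, one_rpow, show -(a * p) + 1 = -(a * p - 1) by ring,
      show -(a * p) - (1 - a) + 1 = -(a * p - a) by ring, neg_div_neg_eq, neg_div_neg_eq,
      landauRatio]
    have h₁ : a * p - 1 ≠ 0 := by linarith
    have h₂ : a * p - a ≠ 0 := by linarith
    field_simp
  rw [integral_landauDeriv_rpow (by linarith) hap,
    setIntegral_eq_of_subset_of_forall_sdiff_eq_zero measurableSet_Ioi
      (Ioi_subset_Ioi zero_le_one) hvanish, ← hlower]
  exact setIntegral_mono_on ((hint₁.sub (hint₂.const_mul p)).const_mul _)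
    (integrableOn_landauPrimitive_div_rpow (by linarith) ha hap) measurableSet_Ioi
    fun x hx => le_landauPrimitive_div_rpow hp ha (le_of_lt hx)

lemma landauRatio_inv_self {p : ℝ} (hp : 1 < p) : landauRatio p p⁻¹ = (p / (p - 1)) ^ p := by
  have hbase : 0 ≤ 1 - p⁻¹ := by linarith [inv_lt_one_of_one_lt₀ hp]
  have hinv : (1 - p⁻¹)⁻¹ = p / (p - 1) := by field_simp
  rw [landauRatio, inv_mul_cancel₀ (by linarith), sub_self, mul_zero, zero_div, sub_zero, mul_one,
    rpow_neg hbase, ← inv_rpow hbase, hinv]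

lemma exists_lt_landauRatio {p A : ℝ} (hp : 1 < p) (hA : A < (p / (p - 1)) ^ p) :
    ∃ a, p⁻¹ < a ∧ a < 1 ∧ A < landauRatio p a := by
  have hp₁ : p⁻¹ < 1 := inv_lt_one_of_one_lt₀ hp
  have hbase : 1 - p⁻¹ ≠ 0 := by linarith
  have hden : p⁻¹ * p - p⁻¹ ≠ 0 := by rw [inv_mul_cancel₀ (by linarith)]; linarith
  have hcont : ContinuousAt (landauRatio p) p⁻¹ := by
    unfold landauRatio
    fun_prop (disch := first | exact hden | exact Or.inl hbase)
  rw [← landauRatio_inv_self hp] at hA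
  have hnear : ∀ᶠ a in 𝓝 p⁻¹, a < 1 ∧ A < landauRatio p a :=
    (eventually_lt_nhds hp₁).and (hcont.eventually (lt_mem_nhds hA))
  exact ((eventually_mem_nhdsWithin (s := Ioi p⁻¹)).and
    (hnear.filter_mono nhdsWithin_le_nhds)).exists

/-- Landau (1926): optimality of the constant `(p/(p-1))^p` in Hardy's inequality.
For `p > 1` and every `A < (p/(p-1))^p` there is an absolutely continuous `f` with
`f(0) = 0`, `f' ≥ 0` a.e. and `0 < ∫_0^∞ f'^p < ∞`, such that
`∫_0^∞ (f(x)/x)^p dx > A ∫_0^∞ f'^p dx`. -/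
theorem landau_hardy_optimal
    (p : ℝ) (hp : 1 < p)
    (A : ℝ) (hA : A < (p / (p - 1)) ^ p) :
    ∃ f g : ℝ → ℝ,
      (∀ x : ℝ, IntervalIntegrable g volume 0 x) ∧
      (∀ x ≥ (0:ℝ), f x = ∫ t in (0:ℝ)..x, g t) ∧
      (∀ᵐ x ∂(volume.restrict (Ioi (0:ℝ))), 0 ≤ g x) ∧
      IntegrableOn (fun x => g x ^ p) (Ioi 0) ∧
      (0 < ∫ x in Ioi (0:ℝ), g x ^ p) ∧
      A * (∫ x in Ioi (0:ℝ), g x ^ p) < ∫ x in Ioi (0:ℝ), (f x / x) ^ p := by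
  obtain ⟨a, hpa, ha, hAa⟩ := exists_lt_landauRatio hp hA
  have hap : 1 < a * p := by rwa [inv_lt_iff_one_lt_mul₀ (by linarith)] at hpa
  have hnorm : 0 < ∫ t in Ioi 0, landauDeriv a t ^ p := by
    rw [integral_landauDeriv_rpow (by linarith) hap]
    exact one_div_pos.mpr (by linarith)
  refine ⟨landauPrimitive a, landauDeriv a,
    intervalIntegrable_landauDeriv a 0, fun _ _ => rfl, ae_of_all _ (landauDeriv_nonneg a),
    integrableOn_landauDeriv_rpow (by linarith) hap, hnorm, ?_⟩
  calc A * ∫ t in Ioi 0, landauDeriv a t ^ p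
      < landauRatio p a * ∫ t in Ioi 0, landauDeriv a t ^ p := mul_lt_mul_of_pos_right hAa hnorm
    _ ≤ _ := landauRatio_mul_le_integral hp.le ha hap
end

section
/- Let γ > 1 and consider the birth-death process with b_0 = 1 and a_i = b_i = i^γ for i ≥ 1. Then the spectral gap λ₁ is strictly positive if and only if γ ≥ 2. -/
/-!
With `aᵢ = bᵢ` detailed balance gives `μᵢ bᵢ = 1`, so `πᵢ bᵢ = 1/Z`, the Dirichlet form is
`D(f) = Z⁻¹ ∑ (f_{i+1} - f_i)²` and `πᵢ = Z⁻¹ i^{-γ}` for `i ≥ 1`.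

If `γ ≥ 2` then `πᵢ ≤ Z⁻¹ i⁻²`, and the discrete Hardy inequality
`∑ᵢ (i⁻¹ ∑_{k<i} |Δₖ|)² ≤ 4 ∑ Δₖ²` bounds `π((f - f₀)²)` by `4 D(f)`; for normalized `f` the left
side is `1 + f₀² ≥ 1`, so `λ₁ ≥ 1/4`.

If `γ < 2` the test functions `min(i, n)` have energy `n/Z`, while their variance is at least of
order `n^{3-γ}/Z`, because `π` puts mass of order `n^{1-γ}/Z` on `[n, 2n)` and `1/Z` at `0`.
Hence `λ₁ = O(n^{γ-2}) → 0`.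
-/

open Real Finset Filter Topology

lemma hardy_step (a : ℕ → ℝ) (N : ℕ) :
    ((∑ k ∈ range (N + 1), a k) / (N + 1)) ^ 2
      + (∑ k ∈ range (N + 1), a k) ^ 2 / (N + 1) - (∑ k ∈ range N, a k) ^ 2 / N
      ≤ 2 * ((∑ k ∈ range (N + 1), a k) / (N + 1)) * a N := by
  rw [sum_range_succ]
  rcases N.eq_zero_or_pos with rfl | hN
  · simp only [Nat.cast_zero, zero_add, sum_range_zero, div_zero, div_one, sub_zero]
    nlinarith [sq_nonneg (a 0)]
  · have hN : (0 : ℝ) < N := by exact_mod_cast hN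
    set S := ∑ k ∈ range N, a k
    -- with the Cesàro means `α` and `β` of `a` up to `N` and `N - 1`, the defect is `N (α - β)²`
    set α := (S + a N) / (N + 1)
    set β := S / N
    have hα : (S + a N) ^ 2 / (N + 1) = (N + 1) * α ^ 2 := by simp only [α]; field_simp
    have hβ : S ^ 2 / N = N * β ^ 2 := by simp only [β]; field_simp
    have haN : a N = (N + 1) * α - N * β := by simp only [α, β]; field_simp; ring
    rw [hα, hβ, haN]
    nlinarith [sq_nonneg (α - β)]

lemma hardy_sum_range_add_le (a : ℕ → ℝ) (N : ℕ) :
    ∑ i ∈ range N, ((∑ k ∈ range (i + 1), a k) / (i + 1)) ^ 2 + (∑ k ∈ range N, a k) ^ 2 / N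
      ≤ 2 * ∑ i ∈ range N, (∑ k ∈ range (i + 1), a k) / (i + 1) * a i := by
  induction N with
  | zero => simp
  | succ N ih =>
    rw [sum_range_succ, sum_range_succ (fun i => (∑ k ∈ range (i + 1), a k) / (i + 1) * a i)]
    have := hardy_step a N
    push_cast
    linarith

lemma hardy_sum_range_le (a : ℕ → ℝ) (N : ℕ) :
    ∑ i ∈ range N, ((∑ k ∈ range (i + 1), a k) / (i + 1)) ^ 2 ≤ 4 * ∑ k ∈ range N, a k ^ 2 := by
  set T := ∑ i ∈ range N, ((∑ k ∈ range (i + 1), a k) / (i + 1)) ^ 2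
  have hT : 0 ≤ T := sum_nonneg fun _ _ => sq_nonneg _
  have hY : 0 ≤ ∑ k ∈ range N, a k ^ 2 := sum_nonneg fun _ _ => sq_nonneg _
  have hrem : 0 ≤ (∑ k ∈ range N, a k) ^ 2 / N := by positivity
  have hCS := sum_mul_sq_le_sq_mul_sq (range N) (fun i => (∑ k ∈ range (i + 1), a k) / (i + 1)) a
  nlinarith [hardy_sum_range_add_le a N]

lemma hasSum_mul_sub_sq {ι : Type*} {p f : ι → ℝ} {m q : ℝ} (hp : HasSum p 1)
    (hm : HasSum (fun i => p i * f i) m) (hq : HasSum (fun i => p i * f i ^ 2) q) (c : ℝ) :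
    HasSum (fun i => p i * (f i - c) ^ 2) (q - 2 * c * m + c ^ 2) := by
  have h := (hq.sub (hm.mul_left (2 * c))).add (hp.mul_left (c ^ 2))
  rw [mul_one] at h
  exact h.congr_fun fun i => by ring

/-- The spectral gap `λ₁` is `sInf (normalizedEnergies π fun i => π i * b i)`. -/
def normalizedEnergies (p w : ℕ → ℝ) : Set ℝ :=
  { r | ∃ f : ℕ → ℝ,
    Summable (fun i => p i * f i) ∧ (∑' i, p i * f i) = 0 ∧
    Summable (fun i => p i * f i ^ 2) ∧ (∑' i, p i * f i ^ 2) = 1 ∧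
    Summable (fun i => w i * (f (i + 1) - f i) ^ 2) ∧
    r = ∑' i, w i * (f (i + 1) - f i) ^ 2 }

lemma normalizedEnergies_bddBelow {p w : ℕ → ℝ} (hw : ∀ i, 0 ≤ w i) :
    BddBelow (normalizedEnergies p w) := by
  refine ⟨0, ?_⟩
  rintro r ⟨f, -, -, -, -, -, rfl⟩
  exact tsum_nonneg fun i => mul_nonneg (hw i) (sq_nonneg _)

lemma div_mem_normalizedEnergies {p w f : ℕ → ℝ} {m V E : ℝ} (hp : HasSum p 1)
    (hm : HasSum (fun i => p i * f i) m) (hV : HasSum (fun i => p i * (f i - m) ^ 2) V)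
    (hV0 : 0 < V) (hE : HasSum (fun i => w i * (f (i + 1) - f i) ^ 2) E) :
    E / V ∈ normalizedEnergies p w := by
  set g := fun i => (f i - m) / √V
  have hg0 : HasSum (fun i => p i * g i) 0 := by
    have h := (hm.sub (hp.mul_right m)).div_const √V
    rw [one_mul, sub_self, zero_div] at h
    exact h.congr_fun fun i => by simp only [g]; ring
  have hg1 : HasSum (fun i => p i * g i ^ 2) 1 := by
    have h := hV.div_const V
    rw [div_self hV0.ne'] at h
    exact h.congr_fun fun i => by simp only [g, div_pow, sq_sqrt hV0.le]; ring
  have hgE : HasSum (fun i => w i * (g (i + 1) - g i) ^ 2) (E / V) :=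
    (hE.div_const V).congr_fun fun i => by
      simp only [g]; rw [← sub_div, div_pow, sq_sqrt hV0.le]; ring
  exact ⟨g, hg0.summable, hg0.tsum_eq, hg1.summable, hg1.tsum_eq, hgE.summable, hgE.tsum_eq.symm⟩

lemma sum_range_mul_sq_sub_le {p f : ℕ → ℝ} {c : ℝ} (hc : 0 ≤ c)
    (hpc : ∀ i : ℕ, p (i + 1) ≤ c / (i + 1) ^ 2) (N : ℕ) :
    ∑ i ∈ range N, p (i + 1) * (f (i + 1) - f 0) ^ 2
      ≤ 4 * c * ∑ k ∈ range N, (f (k + 1) - f k) ^ 2 := by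
  have hterm : ∀ i : ℕ, p (i + 1) * (f (i + 1) - f 0) ^ 2
      ≤ c * ((∑ k ∈ range (i + 1), |f (k + 1) - f k|) / (i + 1)) ^ 2 := by
    intro i
    have hpath : |f (i + 1) - f 0| ≤ ∑ k ∈ range (i + 1), |f (k + 1) - f k| := by
      rw [← sum_range_sub]
      exact abs_sum_le_sum_abs _ _
    calc p (i + 1) * (f (i + 1) - f 0) ^ 2
        ≤ c / (i + 1) ^ 2 * (∑ k ∈ range (i + 1), |f (k + 1) - f k|) ^ 2 :=
          mul_le_mul (hpc i) (sq_le_sq' (abs_le.mp hpath).1 (abs_le.mp hpath).2) (sq_nonneg _)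
            (by positivity)
      _ = c * ((∑ k ∈ range (i + 1), |f (k + 1) - f k|) / (i + 1)) ^ 2 := by rw [div_pow]; ring
  calc ∑ i ∈ range N, p (i + 1) * (f (i + 1) - f 0) ^ 2
      ≤ c * ∑ i ∈ range N, ((∑ k ∈ range (i + 1), |f (k + 1) - f k|) / (i + 1)) ^ 2 := by
        rw [mul_sum]; exact sum_le_sum fun i _ => hterm i
    _ ≤ c * (4 * ∑ k ∈ range N, |f (k + 1) - f k| ^ 2) :=
        mul_le_mul_of_nonneg_left (hardy_sum_range_le _ N) hc
    _ = 4 * c * ∑ k ∈ range N, (f (k + 1) - f k) ^ 2 := by simp only [sq_abs]; ring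

lemma one_div_four_le_of_mem_normalizedEnergies {p : ℕ → ℝ} {c r : ℝ} (hp : HasSum p 1)
    (hc : 0 < c) (hpc : ∀ i : ℕ, p (i + 1) ≤ c / (i + 1) ^ 2)
    (hr : r ∈ normalizedEnergies p fun _ => c) : 1 / 4 ≤ r := by
  obtain ⟨f, hm, hm0, hq, hq1, hE, rfl⟩ := hr
  have hΔ : Summable fun k => (f (k + 1) - f k) ^ 2 :=
    (hE.mul_left c⁻¹).congr fun k => by field_simp
  have hE_eq : ∑' k, c * (f (k + 1) - f k) ^ 2 = c * ∑' k, (f (k + 1) - f k) ^ 2 := tsum_mul_left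
  have hV := hasSum_mul_sub_sq hp hm.hasSum hq.hasSum (f 0)
  rw [hm0, hq1, mul_zero, sub_zero] at hV
  have hpartial : ∀ N, ∑ i ∈ range (N + 1), p i * (f i - f 0) ^ 2
      ≤ 4 * ∑' k, c * (f (k + 1) - f k) ^ 2 := by
    intro N
    rw [sum_range_succ', sub_self, sq, mul_zero, mul_zero, add_zero, hE_eq, ← mul_assoc]
    exact (sum_range_mul_sq_sub_le hc.le hpc N).trans <| mul_le_mul_of_nonneg_left
      (hΔ.sum_le_tsum _ fun k _ => sq_nonneg _) (by positivity)
  have hle := le_of_tendsto' (hV.tendsto_sum_nat.comp (tendsto_add_atTop_nat 1)) hpartial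
  nlinarith [sq_nonneg (f 0)]

lemma hasSum_mul_sq_sub_min (c : ℝ) (n : ℕ) :
    HasSum (fun i : ℕ => c * (((min (i + 1) n : ℕ) : ℝ) - (min i n : ℕ)) ^ 2) (n * c) := by
  have hstep : ∀ i, c * (((min (i + 1) n : ℕ) : ℝ) - (min i n : ℕ)) ^ 2 = if i < n then c else 0 := by
    intro i
    split_ifs with hi
    · rw [min_eq_left (by omega), min_eq_left hi.le]; push_cast; ring
    · rw [min_eq_right (by omega), min_eq_right (by omega)]; ring
  have h : HasSum (fun i => if i < n then c else 0) (∑ i ∈ range n, if i < n then c else 0) :=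
    hasSum_sum_of_ne_finset_zero fun i hi => if_neg (by simpa using hi)
  rw [sum_ite_of_true fun i hi => by simpa using hi, sum_const, card_range, nsmul_eq_mul] at h
  exact h.congr_fun hstep

lemma sq_div_four_mul_min_le {p : ℕ → ℝ} (hp : ∀ i, 0 ≤ p i) {n : ℕ} {m V : ℝ}
    (hV : HasSum (fun i => p i * (((min i n : ℕ) : ℝ) - m) ^ 2) V) :
    (n : ℝ) ^ 2 / 4 * min (p 0) (∑ j ∈ Ico n (2 * n), p j) ≤ V := by
  have hterm : ∀ i, 0 ≤ p i * (((min i n : ℕ) : ℝ) - m) ^ 2 := fun i => mul_nonneg (hp i) (sq_nonneg _)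
  -- `m` is far from `0`, the value at `0`, or from `n`, the value on `[n, 2n)`
  rcases le_or_gt ((n : ℝ) / 2) m with hm | hm
  · have h0 := le_hasSum hV 0 fun j _ => hterm j
    calc (n : ℝ) ^ 2 / 4 * min (p 0) (∑ j ∈ Ico n (2 * n), p j)
        ≤ (n : ℝ) ^ 2 / 4 * p 0 := mul_le_mul_of_nonneg_left (min_le_left _ _) (by positivity)
      _ ≤ p 0 * (((min 0 n : ℕ) : ℝ) - m) ^ 2 := by
          have hsq : ((n : ℝ) / 2) ^ 2 ≤ (0 - m) ^ 2 := by nlinarith [n.cast_nonneg (α := ℝ)]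
          rw [Nat.zero_min, Nat.cast_zero]; nlinarith [mul_le_mul_of_nonneg_left hsq (hp 0)]
      _ ≤ V := h0
  · have hblock := sum_le_hasSum (Ico n (2 * n)) (fun j _ => hterm j) hV
    have hconst : ∀ j ∈ Ico n (2 * n), p j * (((min j n : ℕ) : ℝ) - m) ^ 2 = p j * (n - m) ^ 2 :=
      fun j hj => by rw [min_eq_right (mem_Ico.mp hj).1]
    rw [sum_congr rfl hconst, ← sum_mul] at hblock
    have hsum : 0 ≤ ∑ j ∈ Ico n (2 * n), p j := sum_nonneg fun j _ => hp j
    calc (n : ℝ) ^ 2 / 4 * min (p 0) (∑ j ∈ Ico n (2 * n), p j)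
        ≤ (n : ℝ) ^ 2 / 4 * ∑ j ∈ Ico n (2 * n), p j :=
          mul_le_mul_of_nonneg_left (min_le_right _ _) (by positivity)
      _ ≤ (∑ j ∈ Ico n (2 * n), p j) * (n - m) ^ 2 := by
          have hsq : ((n : ℝ) / 2) ^ 2 ≤ (n - m) ^ 2 := by nlinarith [n.cast_nonneg (α := ℝ)]
          nlinarith [mul_le_mul_of_nonneg_left hsq hsum]
      _ ≤ V := hblock

lemma div_rpow_le_min_sum_Ico {p : ℕ → ℝ} {c γ : ℝ} (hc : 0 < c) (hγ : 1 ≤ γ)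
    (hpc : ∀ j : ℕ, c / (j + 1) ^ γ ≤ p j) {n : ℕ} (hn : 1 ≤ n) :
    n * c / (2 * n) ^ γ ≤ min (p 0) (∑ j ∈ Ico n (2 * n), p j) := by
  have hn0 : (1 : ℝ) ≤ n := by exact_mod_cast hn
  have h2n : (n : ℝ) ≤ (2 * n) ^ γ := by
    calc (n : ℝ) ≤ (2 * n) ^ (1 : ℝ) := by rw [rpow_one]; linarith
      _ ≤ (2 * n) ^ γ := rpow_le_rpow_of_exponent_le (by linarith) hγ
  have hblock : n * (c / (2 * n) ^ γ) ≤ ∑ j ∈ Ico n (2 * n), p j := by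
    have hcard : (Ico n (2 * n)).card = n := by rw [Nat.card_Ico]; omega
    calc n * (c / (2 * n) ^ γ) = ∑ j ∈ Ico n (2 * n), c / (2 * (n : ℝ)) ^ γ := by
          rw [sum_const, hcard, nsmul_eq_mul]
      _ ≤ ∑ j ∈ Ico n (2 * n), p j := sum_le_sum fun j hj => le_trans ?_ (hpc j)
    have hj : (j : ℝ) + 1 ≤ 2 * n := by
      have := (mem_Ico.mp hj).2; exact_mod_cast this
    gcongr
  refine le_min ?_ (by rw [mul_div_assoc]; exact hblock)
  calc n * c / (2 * n) ^ γ ≤ c := by rw [div_le_iff₀ (by positivity)]; nlinarith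
    _ ≤ p 0 := by simpa using hpc 0

lemma exists_mem_normalizedEnergies_le {p : ℕ → ℝ} {c γ : ℝ} (hp : HasSum p 1) (hc : 0 < c)
    (hγ : 1 ≤ γ) (hpc : ∀ j : ℕ, c / (j + 1) ^ γ ≤ p j) {n : ℕ} (hn : 1 ≤ n) :
    ∃ r ∈ normalizedEnergies p fun _ => c, r ≤ 4 * (2 * n) ^ γ / n ^ 2 := by
  have hp0 : ∀ j, 0 ≤ p j := fun j => (by positivity : 0 ≤ c / ((j : ℝ) + 1) ^ γ).trans (hpc j)
  set f : ℕ → ℝ := fun i => (min i n : ℕ)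
  have hf0 : ∀ i, 0 ≤ f i := fun i => Nat.cast_nonneg _
  have hfn : ∀ i, f i ≤ n := fun i => by simp only [f]; exact_mod_cast min_le_right i n
  have hm : Summable fun i => p i * f i :=
    (hp.summable.mul_right (n : ℝ)).of_nonneg_of_le (fun i => mul_nonneg (hp0 i) (hf0 i))
      fun i => mul_le_mul_of_nonneg_left (hfn i) (hp0 i)
  have hq : Summable fun i => p i * f i ^ 2 :=
    (hp.summable.mul_right ((n : ℝ) ^ 2)).of_nonneg_of_le
      (fun i => mul_nonneg (hp0 i) (sq_nonneg _))
      fun i => mul_le_mul_of_nonneg_left (pow_le_pow_left₀ (hf0 i) (hfn i) 2) (hp0 i)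
  obtain ⟨V, hV⟩ : ∃ V, HasSum (fun i => p i * (f i - ∑' i, p i * f i) ^ 2) V :=
    ⟨_, hasSum_mul_sub_sq hp hm.hasSum hq.hasSum _⟩
  have hmin := div_rpow_le_min_sum_Ico hc hγ hpc hn
  have hVlow : n ^ 3 * c / (4 * (2 * n) ^ γ) ≤ V := by
    refine le_trans ?_ (sq_div_four_mul_min_le hp0 hV)
    calc n ^ 3 * c / (4 * (2 * n) ^ γ) = (n : ℝ) ^ 2 / 4 * (n * c / (2 * n) ^ γ) := by ring
      _ ≤ _ := by gcongr
  have hV0 : 0 < V := lt_of_lt_of_le (by positivity) hVlow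
  refine ⟨n * c / V,
    div_mem_normalizedEnergies hp hm.hasSum hV hV0 (hasSum_mul_sq_sub_min c n), ?_⟩
  calc n * c / V ≤ n * c / (n ^ 3 * c / (4 * (2 * n) ^ γ)) := by gcongr
    _ = 4 * (2 * n) ^ γ / n ^ 2 := by field_simp

lemma sInf_normalizedEnergies_nonpos {p : ℕ → ℝ} {c γ : ℝ} (hp : HasSum p 1) (hc : 0 < c)
    (hγ : 1 ≤ γ) (hγ2 : γ < 2) (hpc : ∀ j : ℕ, c / (j + 1) ^ γ ≤ p j) :
    sInf (normalizedEnergies p fun _ => c) ≤ 0 := by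
  have hbound : ∀ n : ℕ, 1 ≤ n → sInf (normalizedEnergies p fun _ => c)
      ≤ 4 * 2 ^ γ * (n : ℝ) ^ (γ - 2) := by
    intro n hn
    have hn0 : (0 : ℝ) < n := by exact_mod_cast hn
    obtain ⟨r, hr, hrle⟩ := exists_mem_normalizedEnergies_le hp hc hγ hpc hn
    calc sInf (normalizedEnergies p fun _ => c) ≤ r :=
          csInf_le (normalizedEnergies_bddBelow fun _ => hc.le) hr
      _ ≤ 4 * (2 * n) ^ γ / n ^ 2 := hrle
      _ = 4 * 2 ^ γ * (n : ℝ) ^ (γ - 2) := by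
          rw [mul_rpow zero_le_two hn0.le, rpow_sub hn0, rpow_two]; ring
  have hlim : Tendsto (fun n : ℕ => 4 * 2 ^ γ * (n : ℝ) ^ (γ - 2)) atTop (𝓝 0) := by
    have h := (tendsto_rpow_neg_atTop (by linarith : 0 < 2 - γ)).comp tendsto_natCast_atTop_atTop
    simpa using h.const_mul (4 * 2 ^ γ)
  exact ge_of_tendsto hlim (eventually_atTop.2 ⟨1, hbound⟩)

lemma stationary_mul_rate_eq {a b mu : ℕ → ℝ} (hmu0 : mu 0 = 1)
    (hmurec : ∀ n, mu (n + 1) = mu n * b n / a (n + 1)) (hab : ∀ n, a (n + 1) = b (n + 1))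
    (hb : ∀ n, b n ≠ 0) (n : ℕ) : mu n * b n = b 0 := by
  induction n with
  | zero => rw [hmu0, one_mul]
  | succ n ih => rw [hmurec, hab, div_mul_cancel₀ _ (hb _), ih]

lemma normalized_stationary {b mu pi : ℕ → ℝ} {Z : ℝ} (hb : ∀ i, 0 < b i)
    (hmu : ∀ i, mu i * b i = 1) (hmusum : Summable mu) (hZ : Z = ∑' n, mu n)
    (hpi : ∀ i, pi i = mu i / Z) : 0 < Z⁻¹ ∧ HasSum pi 1 ∧ ∀ i, pi i = Z⁻¹ / b i := by
  have hmu_eq : ∀ i, mu i = 1 / b i := fun i => by rw [eq_div_iff (hb i).ne', hmu]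
  have hZ0 : 0 < Z := hZ ▸ hmusum.tsum_pos (fun i => by rw [hmu_eq]; exact (one_div_pos.2 (hb i)).le) 0
    (by rw [hmu_eq]; exact one_div_pos.2 (hb 0))
  have h := hmusum.hasSum.div_const Z
  rw [← hZ, div_self hZ0.ne'] at h
  exact ⟨inv_pos.2 hZ0, h.congr_fun hpi, fun i => by rw [hpi, hmu_eq]; ring⟩

lemma one_le_power_rate {b : ℕ → ℝ} {γ : ℝ} (hγ : 0 ≤ γ) (hb0 : b 0 = 1)
    (hbi : ∀ i : ℕ, 1 ≤ i → b i = (i : ℝ) ^ γ) (i : ℕ) : 1 ≤ b i := by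
  rcases i.eq_zero_or_pos with rfl | hi
  · exact hb0.ge
  · rw [hbi i hi]; exact one_le_rpow (by exact_mod_cast hi) hγ

lemma power_rate_le {b : ℕ → ℝ} {γ : ℝ} (hγ : 0 ≤ γ) (hb0 : b 0 = 1)
    (hbi : ∀ i : ℕ, 1 ≤ i → b i = (i : ℝ) ^ γ) (i : ℕ) : b i ≤ (i + 1) ^ γ := by
  rcases i.eq_zero_or_pos with rfl | hi
  · simp [hb0]
  · rw [hbi i hi]; exact rpow_le_rpow (Nat.cast_nonneg _) (by linarith) hγ

lemma sq_le_power_rate {b : ℕ → ℝ} {γ : ℝ} (hγ : 2 ≤ γ)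
    (hbi : ∀ i : ℕ, 1 ≤ i → b i = (i : ℝ) ^ γ) (i : ℕ) : ((i : ℝ) + 1) ^ 2 ≤ b (i + 1) := by
  rw [hbi _ i.succ_pos, ← rpow_two]
  push_cast
  exact rpow_le_rpow_of_exponent_le (by linarith [i.cast_nonneg (α := ℝ)]) hγ

/-- Chen (1996): for the birth-death process with `b₀ = 1`, `aᵢ = bᵢ = i^γ`
(`i ≥ 1`, `γ > 1`), the spectral gap `λ₁` is strictly positive iff `γ ≥ 2`. -/
theorem spectral_gap_positive_iff_power_rates
    (γ : ℝ) (hγ : 1 < γ)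
    (b a : ℕ → ℝ)
    (hb0 : b 0 = 1)
    (hbi : ∀ i : ℕ, 1 ≤ i → b i = (i : ℝ) ^ γ)
    (hai : ∀ i : ℕ, 1 ≤ i → a i = (i : ℝ) ^ γ)
    (mu : ℕ → ℝ) (hmu0 : mu 0 = 1)
    (hmurec : ∀ n, mu (n + 1) = mu n * b n / a (n + 1))
    (hmusum : Summable mu)
    (Z : ℝ) (hZ : Z = ∑' n, mu n)
    (pi : ℕ → ℝ) (hpi : ∀ i, pi i = mu i / Z)
    (lam1 : ℝ)
    (hlam1 : lam1 = sInf { r : ℝ | ∃ f : ℕ → ℝ,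
      Summable (fun i => pi i * f i) ∧ (∑' i, pi i * f i) = 0 ∧
      Summable (fun i => pi i * f i ^ 2) ∧ (∑' i, pi i * f i ^ 2) = 1 ∧
      Summable (fun i => pi i * b i * (f (i + 1) - f i) ^ 2) ∧
      r = ∑' i, pi i * b i * (f (i + 1) - f i) ^ 2 }) :
    0 < lam1 ↔ 2 ≤ γ := by
  have hb : ∀ i, 0 < b i := fun i => one_pos.trans_le (one_le_power_rate (by linarith) hb0 hbi i)
  have hmub : ∀ i, mu i * b i = 1 := hb0 ▸ stationary_mul_rate_eq hmu0 hmurec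
    (fun n => by rw [hai _ n.succ_pos, hbi _ n.succ_pos]) (fun n => (hb n).ne')
  obtain ⟨hZ0, hpi1, hpib⟩ := normalized_stationary hb hmub hmusum hZ hpi
  have hlow : ∀ j : ℕ, Z⁻¹ / (j + 1) ^ γ ≤ pi j := fun j => by
    rw [hpib]
    exact div_le_div_of_nonneg_left hZ0.le (hb j) (power_rate_le (by linarith) hb0 hbi j)
  change lam1 = sInf (normalizedEnergies pi fun i => pi i * b i) at hlam1
  rw [show (fun i => pi i * b i) = fun _ => Z⁻¹ from funext fun i => by
    rw [hpib, div_mul_cancel₀ _ (hb i).ne']] at hlam1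
  subst hlam1
  constructor
  · intro hpos
    by_contra! hγ2
    exact hpos.not_ge (sInf_normalizedEnergies_nonpos hpi1 hZ0 hγ.le hγ2 hlow)
  · intro hγ2
    have hup : ∀ i : ℕ, pi (i + 1) ≤ Z⁻¹ / (i + 1) ^ 2 := fun i => by
      rw [hpib]
      exact div_le_div_of_nonneg_left hZ0.le (by positivity) (sq_le_power_rate hγ2 hbi i)
    obtain ⟨r, hr, -⟩ := exists_mem_normalizedEnergies_le hpi1 hZ0 hγ.le hlow le_rfl
    exact (by norm_num : (0 : ℝ) < 1 / 4).trans_le <| le_csInf ⟨r, hr⟩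
      fun r hr => one_div_four_le_of_mem_normalizedEnergies hpi1 hZ0 hup hr
end
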